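/- arXiv:2507.17469 — 2 statements merged into one kernel-verified Lean document; each statement's English description precedes it below -/
import Mathlib

section
/- Let α ∈ (1/3, 1/2], let 𝐖 = (W, 𝕎) be an α-rough path and Ξ_{s,t} := A_s δW_{s,t} + A'_s 𝕎_{s,t} with A, A' as in the compatibility hypotheses (A' is α-Hölder, δA_{s,t} − A'_s δW_{s,t} is O(|t−s|^{2α})). Then the limit ∫₀ᵗ A_r d𝐖_r := lim over partitions π of [0,t] with mesh → 0 of Σ_{[s,u]∈π} (A_s δW_{s,u} + A'_s 𝕎_{s,u}) exists, and moreover |∫_s^t A_r d𝐖_r − A_s δW_{s,t} − A'_s 𝕎_{s,t}| ≤ C|t−s|^{3α} uniformly in s, t. -/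
open scoped BigOperators

/-- The germ `Ξ_{s,t} = A_s δW_{s,t} + A'_s 𝕎_{s,t}`, written in coordinates. -/
noncomputable def germXi {n : ℕ} (W : ℝ → Fin n → ℝ) (WW : ℝ → ℝ → Fin n → Fin n → ℝ)
    (A : ℝ → Fin n → ℝ) (A' : ℝ → Fin n → Fin n → ℝ) (s t : ℝ) : ℝ :=
  (∑ κ, A s κ * (W t κ - W s κ)) + ∑ κ, ∑ l, A' s κ l * WW s t κ l

open Finset in
noncomputable def sewRS (Xi : ℝ → ℝ → ℝ) (π : ℕ → ℝ) (k : ℕ) : ℝ :=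
  ∑ j ∈ Finset.range k, Xi (π j) (π (j+1))

lemma sew_mono {β : Type*} [Preorder β] {π : ℕ → β} {k : ℕ}
    (h : ∀ i < k, π i ≤ π (i+1)) : ∀ a b, a ≤ b → b ≤ k → π a ≤ π b := by
  intro a b hab hbk
  induction b, hab using Nat.le_induction with
  | base => exact le_refl _
  | succ b hb ih => exact le_trans (ih (by omega)) (h b (by omega))

lemma sewRS_remove (Xi : ℝ → ℝ → ℝ) (π : ℕ → ℝ) (m j : ℕ) (hj : j ≤ m) :
    sewRS Xi π (m+2) =
      sewRS Xi (fun a => if a < j+1 then π a else π (a+1)) (m+1)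
        + (Xi (π j) (π (j+1)) + Xi (π (j+1)) (π (j+2)) - Xi (π j) (π (j+2))) := by
  have e1 : ∀ f : ℕ → ℝ, ∑ a ∈ Finset.range (m+2), f a
      = (∑ a ∈ Finset.range j, f a) + (f j + f (j+1) + ∑ a ∈ Finset.Ico (j+2) (m+2), f a) := by
    intro f
    rw [Finset.range_eq_Ico, ← Finset.sum_Ico_consecutive f (Nat.zero_le j) (by omega : j ≤ m+2),
      ← Finset.sum_Ico_consecutive f (by omega : j ≤ j+2) (by omega : j+2 ≤ m+2),
      Finset.sum_Ico_succ_top (by omega : j ≤ j+1), Finset.sum_Ico_succ_top (le_refl j),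
      Finset.Ico_self, Finset.sum_empty, ← Finset.range_eq_Ico]
    ring
  have e2 : ∀ g : ℕ → ℝ, ∑ a ∈ Finset.range (m+1), g a
      = (∑ a ∈ Finset.range j, g a) + (g j + ∑ a ∈ Finset.Ico (j+1) (m+1), g a) := by
    intro g
    rw [Finset.range_eq_Ico, ← Finset.sum_Ico_consecutive g (Nat.zero_le j) (by omega : j ≤ m+1),
      ← Finset.sum_Ico_consecutive g (by omega : j ≤ j+1) (by omega : j+1 ≤ m+1),
      Finset.sum_Ico_succ_top (le_refl j), Finset.Ico_self, Finset.sum_empty,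
      ← Finset.range_eq_Ico]
    ring
  unfold sewRS
  rw [e1 (fun a => Xi (π a) (π (a+1))), e2 (fun a => Xi ((fun a => if a < j+1 then π a else π (a+1)) a) ((fun a => if a < j+1 then π a else π (a+1)) (a+1)))]
  simp only
  have c1 : ∑ a ∈ Finset.range j, Xi (if a < j+1 then π a else π (a+1)) (if a+1 < j+1 then π (a+1) else π (a+2))
      = ∑ a ∈ Finset.range j, Xi (π a) (π (a+1)) := by
    apply Finset.sum_congr rfl
    intro a ha
    rw [Finset.mem_range] at ha
    rw [if_pos (by omega), if_pos (by omega)]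
  have c2 : (if j < j+1 then π j else π (j+1)) = π j := if_pos (by omega)
  have c3 : (if j+1 < j+1 then π (j+1) else π (j+2)) = π (j+2) := if_neg (by omega)
  have c4 : ∑ a ∈ Finset.Ico (j+1) (m+1), Xi (if a < j+1 then π a else π (a+1)) (if a+1 < j+1 then π (a+1) else π (a+2))
      = ∑ a ∈ Finset.Ico (j+2) (m+2), Xi (π a) (π (a+1)) := by
    rw [Finset.sum_Ico_eq_sum_range, Finset.sum_Ico_eq_sum_range]
    have hn : m+1 - (j+1) = m+2 - (j+2) := by omega
    rw [hn]
    apply Finset.sum_congr rfl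
    intro a _
    rw [if_neg (by omega), if_neg (by omega)]
    have h1 : j+1+a+1 = j+2+a := by omega
    have h2 : j+1+a+1+1 = j+2+a+1 := by omega
    rw [h1, h2]
  rw [c1, c2, c3, c4]
  ring

noncomputable def sewC (γ : ℝ) : ℝ := ∑' j : ℕ, ((2:ℝ)/(j+1))^γ

lemma sewC_summable {γ : ℝ} (hγ : 1 < γ) : Summable (fun j : ℕ => ((2:ℝ)/(j+1))^γ) := by
  have h1 : Summable (fun j : ℕ => 1 / ((j:ℝ)+1) ^ γ) := by
    have := (Real.summable_one_div_nat_rpow (p := γ)).2 hγ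
    have h2 := (summable_nat_add_iff (f := fun n : ℕ => 1 / (n:ℝ) ^ γ) 1).2 this
    convert h2 using 2 with j
    push_cast
    all_goals (push_cast; rfl)
  have := h1.mul_left ((2:ℝ)^γ)
  apply this.congr
  intro j
  rw [Real.div_rpow (by norm_num) (by positivity), mul_one_div]

lemma sewC_nonneg {γ : ℝ} : 0 ≤ sewC γ :=
  tsum_nonneg (fun j => Real.rpow_nonneg (by positivity) _)

lemma sew_partial_le_sewC {γ : ℝ} (hγ : 1 < γ) (k : ℕ) :
    ∑ j ∈ Finset.range k, ((2:ℝ)/(j+1))^γ ≤ sewC γ :=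
  (sewC_summable hγ).sum_le_tsum _ (fun j _ => Real.rpow_nonneg (by positivity) _)

lemma sew_maximal (Xi : ℝ → ℝ → ℝ) (T γ K : ℝ) (hγ : 1 < γ) (hK : 0 ≤ K)
    (hz : ∀ s, 0 ≤ s → s ≤ T → Xi s s = 0)
    (hd : ∀ s u t, 0 ≤ s → s ≤ u → u ≤ t → t ≤ T → |Xi s t - Xi s u - Xi u t| ≤ K * (t-s)^γ) :
    ∀ k (π : ℕ → ℝ), (∀ i < k, π i ≤ π (i+1)) → 0 ≤ π 0 → π k ≤ T →
      |sewRS Xi π k - Xi (π 0) (π k)| ≤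
        K * (∑ j ∈ Finset.range (k-1), ((2:ℝ)/(j+1))^γ) * (π k - π 0)^γ := by
  intro k
  induction k using Nat.strong_induction_on with
  | _ k ih =>
    match k with
    | 0 =>
      intro π _ h0 hT
      simp only [sewRS, Finset.range_zero, Finset.sum_empty]
      rw [hz (π 0) h0 hT]
      simp
    | 1 =>
      intro π _ h0 hT
      simp only [sewRS, Finset.range_one, Finset.sum_singleton]
      simp
    | (m+2) =>
      intro π hmono h0 hT
      have hmono' := sew_mono hmono
      have hst : π 0 ≤ π (m+2) := hmono' 0 (m+2) (by omega) (le_refl _)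
      have hbd : ∀ i ≤ m+2, 0 ≤ π i ∧ π i ≤ T := by
        intro i hi
        exact ⟨le_trans h0 (hmono' 0 i (by omega) hi), le_trans (hmono' i (m+2) hi (le_refl _)) hT⟩
      -- find a point with small adjacent intervals
      have hsum : ∑ i ∈ Finset.range (m+1), (π (i+2) - π i) ≤ 2*(π (m+2) - π 0) := by
        have e : ∀ i ∈ Finset.range (m+1), π (i+2) - π i
            = ((fun i => π (i+1)) (i+1) - (fun i => π (i+1)) i) + (π (i+1) - π i) := by
          intro i _; simp only; ring
        rw [Finset.sum_congr rfl e, Finset.sum_add_distrib, Finset.sum_range_sub (fun i => π (i+1)),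
          Finset.sum_range_sub π]
        have h1 : π 0 ≤ π 1 := hmono' 0 1 (by omega) (by omega)
        have h2 : π (m+1) ≤ π (m+2) := hmono' (m+1) (m+2) (by omega) (le_refl _)
        linarith
      have hex : ∃ j ∈ Finset.range (m+1), π (j+2) - π j ≤ 2*(π (m+2) - π 0)/(m+1) := by
      -- use exists_le_of_sum_le
        apply Finset.exists_le_of_sum_le (Finset.nonempty_range_iff.2 (by omega))
        rw [Finset.sum_const, Finset.card_range, nsmul_eq_mul]
        have hne : ((m:ℝ)+1) ≠ 0 := by positivity
        calc ∑ i ∈ Finset.range (m+1), (π (i+2) - π i) ≤ 2*(π (m+2) - π 0) := hsum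
          _ = (m+1:ℕ) * (2*(π (m+2) - π 0)/(m+1)) := by push_cast; field_simp
      obtain ⟨j, hjmem, hjle⟩ := hex
      rw [Finset.mem_range] at hjmem
      have hj : j ≤ m := by omega
      set π' := fun a => if a < j+1 then π a else π (a+1) with hπ'
      have hmono2 : ∀ i < m+1, π' i ≤ π' (i+1) := by
        intro i hi
        simp only [hπ']
        by_cases h1 : i+1 < j+1
        · rw [if_pos (by omega), if_pos h1]; exact hmono i (by omega)
        · by_cases h2 : i < j+1
          · rw [if_pos h2, if_neg h1]
            have : i = j := by omega
            subst this
            exact hmono' i (i+2) (by omega) (by omega)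
          · rw [if_neg h2, if_neg h1]; exact hmono (i+1) (by omega)
      have h0' : π' 0 = π 0 := if_pos (by omega)
      have hl' : π' (m+1) = π (m+2) := if_neg (by omega)
      have ihm := ih (m+1) (by omega) π' hmono2 (h0' ▸ h0) (hl' ▸ hT)
      rw [h0', hl'] at ihm
      have hrem := sewRS_remove Xi π m j hj
      have hcost : |Xi (π j) (π (j+1)) + Xi (π (j+1)) (π (j+2)) - Xi (π j) (π (j+2))|
          ≤ K * (2/((m:ℝ)+1))^γ * (π (m+2) - π 0)^γ := by
        have hd' := hd (π j) (π (j+1)) (π (j+2)) (hbd j (by omega)).1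
          (hmono j (by omega)) (hmono (j+1) (by omega)) (hbd (j+2) (by omega)).2
        have habs : |Xi (π j) (π (j+1)) + Xi (π (j+1)) (π (j+2)) - Xi (π j) (π (j+2))|
            = |Xi (π j) (π (j+2)) - Xi (π j) (π (j+1)) - Xi (π (j+1)) (π (j+2))| := by
          rw [← abs_neg]; congr 1; ring
        rw [habs]
        refine le_trans hd' ?_
        have hsub : (0:ℝ) ≤ π (j+2) - π j := sub_nonneg.2 (hmono' j (j+2) (by omega) (by omega))
        have hle : π (j+2) - π j ≤ (2/((m:ℝ)+1)) * (π (m+2) - π 0) := by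
          rw [div_mul_eq_mul_div, mul_comm]
          calc π (j+2) - π j ≤ 2*(π (m+2) - π 0)/(m+1) := hjle
            _ = (π (m+2) - π 0) * 2 / ((m:ℝ)+1) := by ring
        calc K * (π (j+2) - π j)^γ ≤ K * ((2/((m:ℝ)+1)) * (π (m+2) - π 0))^γ := by
              apply mul_le_mul_of_nonneg_left _ hK
              exact Real.rpow_le_rpow hsub hle (by linarith)
          _ = K * (2/((m:ℝ)+1))^γ * (π (m+2) - π 0)^γ := by
              rw [Real.mul_rpow (by positivity) (by linarith [hst])]
              ring
      have hS : ∑ a ∈ Finset.range (m+2-1), ((2:ℝ)/(a+1))^γ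
          = (∑ a ∈ Finset.range (m+1-1), ((2:ℝ)/(a+1))^γ) + (2/((m:ℝ)+1))^γ := by
        have : m+2-1 = (m+1-1)+1 := by omega
        rw [this, Finset.sum_range_succ]
        have h' : m+1-1 = m := by omega
        rw [h']
      calc |sewRS Xi π (m+2) - Xi (π 0) (π (m+2))|
          ≤ |sewRS Xi π' (m+1) - Xi (π 0) (π (m+2))|
            + |Xi (π j) (π (j+1)) + Xi (π (j+1)) (π (j+2)) - Xi (π j) (π (j+2))| := by
            rw [hrem]
            have : sewRS Xi π' (m+1) + (Xi (π j) (π (j+1)) + Xi (π (j+1)) (π (j+2)) - Xi (π j) (π (j+2))) - Xi (π 0) (π (m+2))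
              = (sewRS Xi π' (m+1) - Xi (π 0) (π (m+2))) + (Xi (π j) (π (j+1)) + Xi (π (j+1)) (π (j+2)) - Xi (π j) (π (j+2))) := by ring
            rw [this]
            exact abs_add_le _ _
        _ ≤ K * (∑ a ∈ Finset.range (m+1-1), ((2:ℝ)/(a+1))^γ) * (π (m+2) - π 0)^γ
            + K * (2/((m:ℝ)+1))^γ * (π (m+2) - π 0)^γ := add_le_add ihm hcost
        _ = K * (∑ a ∈ Finset.range (m+2-1), ((2:ℝ)/(a+1))^γ) * (π (m+2) - π 0)^γ := by
            rw [hS]; ring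

lemma sew_maximal' (Xi : ℝ → ℝ → ℝ) (T γ K : ℝ) (hγ : 1 < γ) (hK : 0 ≤ K)
    (hz : ∀ s, 0 ≤ s → s ≤ T → Xi s s = 0)
    (hd : ∀ s u t, 0 ≤ s → s ≤ u → u ≤ t → t ≤ T → |Xi s t - Xi s u - Xi u t| ≤ K * (t-s)^γ)
    (k : ℕ) (π : ℕ → ℝ) (hmono : ∀ i < k, π i ≤ π (i+1)) (h0 : 0 ≤ π 0) (hT : π k ≤ T) :
    |sewRS Xi π k - Xi (π 0) (π k)| ≤ K * sewC γ * (π k - π 0)^γ := by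
  refine le_trans (sew_maximal Xi T γ K hγ hK hz hd k π hmono h0 hT) ?_
  have h1 : (0:ℝ) ≤ (π k - π 0)^γ :=
    Real.rpow_nonneg (sub_nonneg.2 (sew_mono hmono 0 k (by omega) (le_refl _))) _
  apply mul_le_mul_of_nonneg_right _ h1
  exact mul_le_mul_of_nonneg_left (sew_partial_le_sewC hγ _) hK

lemma sew_group (f : ℕ → ℝ) (φ : ℕ → ℕ) (k : ℕ) (hφ : ∀ i < k, φ i ≤ φ (i+1)) :
    ∑ j ∈ Finset.Ico (φ 0) (φ k), f j
      = ∑ i ∈ Finset.range k, ∑ j ∈ Finset.Ico (φ i) (φ (i+1)), f j := by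
  induction k with
  | zero => simp
  | succ k ih =>
    rw [Finset.sum_range_succ, ← ih (fun i hi => hφ i (by omega)),
      Finset.sum_Ico_consecutive f (sew_mono hφ 0 k (by omega) (by omega)) (hφ k (by omega))]

lemma sew_refine (Xi : ℝ → ℝ → ℝ) (T γ K : ℝ) (hγ : 1 < γ) (hK : 0 ≤ K)
    (hz : ∀ s, 0 ≤ s → s ≤ T → Xi s s = 0)
    (hd : ∀ s u t, 0 ≤ s → s ≤ u → u ≤ t → t ≤ T → |Xi s t - Xi s u - Xi u t| ≤ K * (t-s)^γ)
    (π : ℕ → ℝ) (k : ℕ) (ρ : ℕ → ℝ) (φ : ℕ → ℕ)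
    (hπ : ∀ i < k, π i ≤ π (i+1)) (hρ : ∀ j < φ k, ρ j ≤ ρ (j+1))
    (hφ : ∀ i < k, φ i ≤ φ (i+1)) (hφ0 : φ 0 = 0)
    (hmatch : ∀ i ≤ k, ρ (φ i) = π i) (h0 : 0 ≤ π 0) (hT : π k ≤ T) :
    |sewRS Xi ρ (φ k) - sewRS Xi π k|
      ≤ K * sewC γ * ∑ i ∈ Finset.range k, (π (i+1) - π i)^γ := by
  have hφm := sew_mono hφ
  have hπm := sew_mono hπ
  have hsplit : sewRS Xi ρ (φ k)
      = ∑ i ∈ Finset.range k, ∑ j ∈ Finset.Ico (φ i) (φ (i+1)), Xi (ρ j) (ρ (j+1)) := by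
    rw [sewRS, show Finset.range (φ k) = Finset.Ico (φ 0) (φ k) by
      rw [hφ0, Finset.range_eq_Ico]]
    exact sew_group _ φ k hφ
  have hseg : ∀ i < k, |(∑ j ∈ Finset.Ico (φ i) (φ (i+1)), Xi (ρ j) (ρ (j+1)))
      - Xi (π i) (π (i+1))| ≤ K * sewC γ * (π (i+1) - π i)^γ := by
    intro i hi
    set σ : ℕ → ℝ := fun a => ρ (φ i + a) with hσ
    have hlen : ∑ j ∈ Finset.Ico (φ i) (φ (i+1)), Xi (ρ j) (ρ (j+1))
        = sewRS Xi σ (φ (i+1) - φ i) := by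
      rw [Finset.sum_Ico_eq_sum_range, sewRS]
      apply Finset.sum_congr rfl
      intro a _
      rfl
    have hσ0 : σ 0 = π i := by simp only [hσ, Nat.add_zero]; exact hmatch i (by omega)
    have hσl : σ (φ (i+1) - φ i) = π (i+1) := by
      simp only [hσ]
      have : φ i + (φ (i+1) - φ i) = φ (i+1) := by
        have := hφ i hi; omega
      rw [this]; exact hmatch (i+1) (by omega)
    have hσmono : ∀ a < φ (i+1) - φ i, σ a ≤ σ (a+1) := by
      intro a ha
      simp only [hσ]
      have h1 : φ i + a + 1 = φ i + (a+1) := by omega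
      rw [← h1]
      apply hρ
      have h2 : φ i + a < φ (i+1) := by omega
      have h3 : φ (i+1) ≤ φ k := hφm (i+1) k (by omega) (by omega)
      omega
    have hb0 : 0 ≤ σ 0 := by rw [hσ0]; exact le_trans h0 (hπm 0 i (by omega) (by omega))
    have hbT : σ (φ (i+1) - φ i) ≤ T := by
      rw [hσl]; exact le_trans (hπm (i+1) k (by omega) (by omega)) hT
    have := sew_maximal' Xi T γ K hγ hK hz hd (φ (i+1) - φ i) σ hσmono hb0 hbT
    rw [hσ0, hσl] at this
    rw [hlen]
    exact this
  have hdiff : sewRS Xi ρ (φ k) - sewRS Xi π k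
      = ∑ i ∈ Finset.range k, ((∑ j ∈ Finset.Ico (φ i) (φ (i+1)), Xi (ρ j) (ρ (j+1)))
          - Xi (π i) (π (i+1))) := by
    rw [hsplit, sewRS, ← Finset.sum_sub_distrib]
  rw [hdiff]
  refine le_trans (Finset.abs_sum_le_sum_abs _ _) ?_
  rw [Finset.mul_sum]
  apply Finset.sum_le_sum
  intro i hi
  exact hseg i (Finset.mem_range.1 hi)

lemma sew_merge (π₁ π₂ : ℕ → ℝ) (k₁ k₂ : ℕ)
    (h₁ : ∀ i < k₁, π₁ i ≤ π₁ (i+1)) (h₂ : ∀ i < k₂, π₂ i ≤ π₂ (i+1))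
    (h0 : π₁ 0 = π₂ 0) (hl : π₁ k₁ = π₂ k₂) :
    ∃ (ρ : ℕ → ℝ) (φ₁ φ₂ : ℕ → ℕ),
      (∀ j < φ₁ k₁, ρ j ≤ ρ (j+1)) ∧
      (∀ i < k₁, φ₁ i ≤ φ₁ (i+1)) ∧ (∀ i < k₂, φ₂ i ≤ φ₂ (i+1)) ∧
      φ₁ 0 = 0 ∧ φ₂ 0 = 0 ∧ φ₁ k₁ = φ₂ k₂ ∧
      (∀ i ≤ k₁, ρ (φ₁ i) = π₁ i) ∧ (∀ i ≤ k₂, ρ (φ₂ i) = π₂ i) := by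
  classical
  set S : Finset ℝ := (Finset.range (k₁+1)).image π₁ ∪ (Finset.range (k₂+1)).image π₂ with hS
  set l : List ℝ := S.sort (· ≤ ·) with hldef
  have hsorted : l.Pairwise (· < ·) := (Finset.sortedLT_sort S).pairwise
  have hnodup : l.Nodup := (Finset.sort_nodup S _)
  have hmem1 : ∀ i ≤ k₁, π₁ i ∈ l := by
    intro i hi
    rw [hldef, Finset.mem_sort, hS]
    exact Finset.mem_union_left _ (Finset.mem_image.2 ⟨i, Finset.mem_range.2 (by omega), rfl⟩)
  have hmem2 : ∀ i ≤ k₂, π₂ i ∈ l := by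
    intro i hi
    rw [hldef, Finset.mem_sort, hS]
    exact Finset.mem_union_right _ (Finset.mem_image.2 ⟨i, Finset.mem_range.2 (by omega), rfl⟩)
  set ρ : ℕ → ℝ := fun j => l.getD j 0 with hρdef
  set φ₁ : ℕ → ℕ := fun i => l.idxOf (π₁ i) with hφ₁def
  set φ₂ : ℕ → ℕ := fun i => l.idxOf (π₂ i) with hφ₂def
  have hidxlt : ∀ x ∈ l, l.idxOf x < l.length := fun x hx => List.idxOf_lt_length_iff.2 hx
  have hget : ∀ x (hx : x ∈ l), ρ (l.idxOf x) = x := by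
    intro x hx
    rw [hρdef]
    simp only
    rw [List.getD_eq_getElem l 0 (hidxlt x hx)]
    exact List.getElem_idxOf _
  have hmatch1 : ∀ i ≤ k₁, ρ (φ₁ i) = π₁ i := fun i hi => hget _ (hmem1 i hi)
  have hmatch2 : ∀ i ≤ k₂, ρ (φ₂ i) = π₂ i := fun i hi => hget _ (hmem2 i hi)
  have hidxmono : ∀ x y, x ∈ l → y ∈ l → x ≤ y → l.idxOf x ≤ l.idxOf y := by
    intro x y hx hy hxy
    by_contra hcon
    push_neg at hcon
    have := hsorted.rel_get_of_lt
      (a := ⟨l.idxOf y, hidxlt y hy⟩) (b := ⟨l.idxOf x, hidxlt x hx⟩) hcon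
    simp only [List.get_eq_getElem, List.getElem_idxOf] at this
    exact absurd hxy (not_le.2 this)
  have hρmono : ∀ j < φ₁ k₁, ρ j ≤ ρ (j+1) := by
    intro j hj
    have hlen : j + 1 < l.length := by
      have h1 := hidxlt _ (hmem1 k₁ (le_refl _))
      have hj' : j < List.idxOf (π₁ k₁) l := by simpa [hφ₁def] using hj
      omega
    have := hsorted.rel_get_of_lt (a := ⟨j, by omega⟩) (b := ⟨j+1, hlen⟩) (by simp)
    simp only [List.get_eq_getElem] at this
    rw [hρdef]
    simp only
    rw [List.getD_eq_getElem l 0 (by omega), List.getD_eq_getElem l 0 hlen]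
    exact le_of_lt this
  have hφ₁mono : ∀ i < k₁, φ₁ i ≤ φ₁ (i+1) := by
    intro i hi
    exact hidxmono _ _ (hmem1 i (by omega)) (hmem1 (i+1) (by omega)) (h₁ i hi)
  have hφ₂mono : ∀ i < k₂, φ₂ i ≤ φ₂ (i+1) := by
    intro i hi
    exact hidxmono _ _ (hmem2 i (by omega)) (hmem2 (i+1) (by omega)) (h₂ i hi)
  -- φ₁ 0 = 0 : π₁ 0 is the minimum
  have hminS : ∀ x ∈ l, π₁ 0 ≤ x := by
    intro x hx
    rw [hldef, Finset.mem_sort, hS] at hx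
    rcases Finset.mem_union.1 hx with hx | hx
    · obtain ⟨i, hi, rfl⟩ := Finset.mem_image.1 hx
      rw [Finset.mem_range] at hi
      exact sew_mono h₁ 0 i (Nat.zero_le _) (by omega)
    · obtain ⟨i, hi, rfl⟩ := Finset.mem_image.1 hx
      rw [Finset.mem_range] at hi
      rw [h0]
      exact sew_mono h₂ 0 i (Nat.zero_le _) (by omega)
  have hφ₁0 : φ₁ 0 = 0 := by
    have hne : l ≠ [] := List.ne_nil_of_mem (hmem1 0 (by omega))
    have hlen0 : 0 < l.length := List.length_pos_iff.2 hne
    have h0mem : l[0] ∈ l := List.getElem_mem _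
    have hle1 : π₁ 0 ≤ l[0] := hminS _ h0mem
    have hle2 : l[0] ≤ π₁ 0 := by
      rcases Nat.eq_zero_or_pos (l.idxOf (π₁ 0)) with h | h
      · rw [← List.getElem_idxOf (hidxlt _ (hmem1 0 (by omega)))]
        simp [h]
      · have := hsorted.rel_get_of_lt (a := ⟨0, hlen0⟩)
          (b := ⟨l.idxOf (π₁ 0), hidxlt _ (hmem1 0 (by omega))⟩) h
        simp only [List.get_eq_getElem, List.getElem_idxOf] at this
        exact le_of_lt this
    have heq : l[0] = π₁ 0 := le_antisymm hle2 hle1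
    rw [hφ₁def]
    simp only
    rw [← heq]
    exact hnodup.idxOf_getElem 0 hlen0
  have hφ₂0 : φ₂ 0 = 0 := by
    rw [hφ₂def]
    simp only
    rw [← h0]
    exact hφ₁0
  have hφeq : φ₁ k₁ = φ₂ k₂ := by
    rw [hφ₁def, hφ₂def]
    simp only
    rw [hl]
  exact ⟨ρ, φ₁, φ₂, hρmono, hφ₁mono, hφ₂mono, hφ₁0, hφ₂0, hφeq, hmatch1, hmatch2⟩

lemma sew_compare (Xi : ℝ → ℝ → ℝ) (T γ K : ℝ) (hγ : 1 < γ) (hK : 0 ≤ K)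
    (hz : ∀ s, 0 ≤ s → s ≤ T → Xi s s = 0)
    (hd : ∀ s u t, 0 ≤ s → s ≤ u → u ≤ t → t ≤ T → |Xi s t - Xi s u - Xi u t| ≤ K * (t-s)^γ)
    (π₁ π₂ : ℕ → ℝ) (k₁ k₂ : ℕ)
    (h₁ : ∀ i < k₁, π₁ i ≤ π₁ (i+1)) (h₂ : ∀ i < k₂, π₂ i ≤ π₂ (i+1))
    (h00 : π₁ 0 = π₂ 0) (hll : π₁ k₁ = π₂ k₂) (hlo : 0 ≤ π₁ 0) (hhi : π₁ k₁ ≤ T) :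
    |sewRS Xi π₁ k₁ - sewRS Xi π₂ k₂|
      ≤ K * sewC γ * ((∑ i ∈ Finset.range k₁, (π₁ (i+1) - π₁ i)^γ)
          + ∑ i ∈ Finset.range k₂, (π₂ (i+1) - π₂ i)^γ) := by
  obtain ⟨ρ, φ₁, φ₂, hρmono, hφ₁mono, hφ₂mono, hφ₁0, hφ₂0, hφeq, hmatch1, hmatch2⟩ :=
    sew_merge π₁ π₂ k₁ k₂ h₁ h₂ h00 hll
  have e1 := sew_refine Xi T γ K hγ hK hz hd π₁ k₁ ρ φ₁ h₁ hρmono hφ₁mono hφ₁0 hmatch1 hlo hhi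
  have e2 := sew_refine Xi T γ K hγ hK hz hd π₂ k₂ ρ φ₂ h₂ (hφeq ▸ hρmono) hφ₂mono hφ₂0
    hmatch2 (h00 ▸ hlo) (hll ▸ hhi)
  have heq : sewRS Xi π₁ k₁ - sewRS Xi π₂ k₂
      = (sewRS Xi π₁ k₁ - sewRS Xi ρ (φ₁ k₁)) + (sewRS Xi ρ (φ₂ k₂) - sewRS Xi π₂ k₂) := by
    rw [hφeq]; ring
  rw [heq]
  refine le_trans (abs_add_le _ _) ?_
  rw [mul_add]
  exact add_le_add (by rw [abs_sub_comm]; exact e1) e2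

lemma sew_rpow_split {x γ : ℝ} (hx : 0 ≤ x) (hγ : 1 < γ) : x^γ = x^(γ-1) * x := by
  have e : x^(γ-1+1) = x^(γ-1) * x^(1:ℝ) := Real.rpow_add' hx (by linarith)
  have e2 : γ-1+1 = γ := by ring
  rw [e2] at e
  rw [e, Real.rpow_one]

lemma sew_mesh_bound (γ : ℝ) (hγ : 1 < γ) (π : ℕ → ℝ) (k : ℕ) (μ : ℝ) (hμ : 0 ≤ μ)
    (hmono : ∀ i < k, π i ≤ π (i+1)) (hmesh : ∀ i < k, π (i+1) - π i ≤ μ) :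
    ∑ i ∈ Finset.range k, (π (i+1) - π i)^γ ≤ μ^(γ-1) * (π k - π 0) := by
  have h1 : ∀ i ∈ Finset.range k, (π (i+1) - π i)^γ ≤ μ^(γ-1) * (π (i+1) - π i) := by
    intro i hi
    rw [Finset.mem_range] at hi
    have hΔ : 0 ≤ π (i+1) - π i := sub_nonneg.2 (hmono i hi)
    rw [sew_rpow_split hΔ hγ]
    apply mul_le_mul_of_nonneg_right _ hΔ
    exact Real.rpow_le_rpow hΔ (hmesh i hi) (by linarith)
  refine le_trans (Finset.sum_le_sum h1) ?_
  rw [← Finset.mul_sum, Finset.sum_range_sub π]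


lemma sew_unif_mono (t : ℝ) (ht : 0 ≤ t) (N : ℕ) :
    ∀ i < N+1, (fun j : ℕ => t*(j:ℝ)/((N:ℝ)+1)) i ≤ (fun j : ℕ => t*(j:ℝ)/((N:ℝ)+1)) (i+1) := by
  intro i _
  simp only
  have hN : (0:ℝ) < (N:ℝ)+1 := by positivity
  rw [div_le_div_iff₀ hN hN]
  push_cast
  nlinarith [mul_nonneg ht (le_of_lt hN)]

lemma sew_unif_zero (t : ℝ) (N : ℕ) : (fun j : ℕ => t*(j:ℝ)/((N:ℝ)+1)) 0 = 0 := by simp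

lemma sew_unif_last (t : ℝ) (N : ℕ) : (fun j : ℕ => t*(j:ℝ)/((N:ℝ)+1)) (N+1) = t := by
  have hN : ((N:ℝ)+1) ≠ 0 := by positivity
  simp only
  push_cast
  field_simp

lemma sew_unif_step (t : ℝ) (N : ℕ) (i : ℕ) :
    (fun j : ℕ => t*(j:ℝ)/((N:ℝ)+1)) (i+1) - (fun j : ℕ => t*(j:ℝ)/((N:ℝ)+1)) i
      = t/((N:ℝ)+1) := by
  have hN : ((N:ℝ)+1) ≠ 0 := by positivity
  simp only
  push_cast
  field_simp
  ring

lemma sew_comp_unif (Xi : ℝ → ℝ → ℝ) (T γ K : ℝ) (hγ : 1 < γ) (hK : 0 ≤ K)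
    (hz : ∀ s, 0 ≤ s → s ≤ T → Xi s s = 0)
    (hd : ∀ s u t, 0 ≤ s → s ≤ u → u ≤ t → t ≤ T → |Xi s t - Xi s u - Xi u t| ≤ K * (t-s)^γ)
    (t : ℝ) (ht0 : 0 ≤ t) (htT : t ≤ T)
    (k : ℕ) (π : ℕ → ℝ) (hm : ∀ i < k, π i ≤ π (i+1)) (h0 : π 0 = 0) (hk : π k = t)
    (μ : ℝ) (hμ : 0 ≤ μ) (hmesh : ∀ i < k, π (i+1) - π i ≤ μ) (N : ℕ) :
    |sewRS Xi π k - sewRS Xi (fun j : ℕ => t*(j:ℝ)/((N:ℝ)+1)) (N+1)|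
      ≤ K * sewC γ * (μ^(γ-1)*t) + K * sewC γ * ((t/((N:ℝ)+1))^(γ-1)*t) := by
  have hσmono := sew_unif_mono t ht0 N
  have hσ0 := sew_unif_zero t N
  have hσlast := sew_unif_last t N
  have hcmp := sew_compare Xi T γ K hγ hK hz hd π (fun j : ℕ => t*(j:ℝ)/((N:ℝ)+1)) k (N+1)
    hm hσmono (by rw [h0]; exact hσ0.symm) (by rw [hk]; exact hσlast.symm) (by rw [h0]) (by rw [hk]; exact htT)
  have hb1 : ∑ i ∈ Finset.range k, (π (i+1) - π i)^γ ≤ μ^(γ-1)*t := by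
    have h := sew_mesh_bound γ hγ π k μ hμ hm hmesh
    rw [h0, hk] at h
    simpa using h
  have hb2 : ∑ i ∈ Finset.range (N+1),
      ((fun j : ℕ => t*(j:ℝ)/((N:ℝ)+1)) (i+1) - (fun j : ℕ => t*(j:ℝ)/((N:ℝ)+1)) i)^γ
      ≤ (t/((N:ℝ)+1))^(γ-1)*t := by
    have h := sew_mesh_bound γ hγ (fun j : ℕ => t*(j:ℝ)/((N:ℝ)+1)) (N+1) (t/((N:ℝ)+1))
      (by positivity) hσmono (fun i _ => le_of_eq (sew_unif_step t N i))
    rw [show t * ((0:ℕ):ℝ) / ((N:ℝ)+1) = 0 from hσ0, show t * ((N+1:ℕ):ℝ) / ((N:ℝ)+1) = t from hσlast] at h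
    simpa using h
  refine le_trans hcmp ?_
  have hKC : (0:ℝ) ≤ K * sewC γ := mul_nonneg hK sewC_nonneg
  calc K * sewC γ * ((∑ i ∈ Finset.range k, (π (i+1) - π i)^γ)
        + ∑ i ∈ Finset.range (N+1),
          ((fun j : ℕ => t*(j:ℝ)/((N:ℝ)+1)) (i+1) - (fun j : ℕ => t*(j:ℝ)/((N:ℝ)+1)) i)^γ)
      ≤ K * sewC γ * (μ^(γ-1)*t + (t/((N:ℝ)+1))^(γ-1)*t) :=
        mul_le_mul_of_nonneg_left (add_le_add hb1 hb2) hKC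
    _ = K * sewC γ * (μ^(γ-1)*t) + K * sewC γ * ((t/((N:ℝ)+1))^(γ-1)*t) := by ring

set_option maxHeartbeats 2000000 in

/-- rough/sewing integral: with `𝐖 = (W, 𝕎)` an `α`-rough path
(`α ∈ (1/3,1/2]`, Chen's relation, Hölder bounds) and `(A, A')` compatible
(`A'` is `α`-Hölder and `δA_{s,t} − A'_s δW_{s,t} = O(|t−s|^{2α})`), the Riemann sums
`Σ_{[s,u]∈π} (A_s δW_{s,u} + A'_s 𝕎_{s,u})` converge as the mesh of the partition tends
to zero, defining `I_t = ∫₀ᵗ A d𝐖`, and `|I_t − I_s − A_s δW_{s,t} − A'_s 𝕎_{s,t}| ≤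
C|t−s|^{3α}`. -/
theorem stmt_6 (n : ℕ) (T α C0 C1 C2 : ℝ) (hT : 0 < T)
    (hα : 1/3 < α) (hα' : α ≤ 1/2)
    (W : ℝ → Fin n → ℝ) (WW : ℝ → ℝ → Fin n → Fin n → ℝ)
    (A : ℝ → Fin n → ℝ) (A' : ℝ → Fin n → Fin n → ℝ)
    (hChen : ∀ s u t, 0 ≤ s → s ≤ u → u ≤ t → t ≤ T → ∀ i j,
      WW s t i j - WW s u i j - WW u t i j = (W u i - W s i) * (W t j - W u j))
    (hW : ∀ s t, 0 ≤ s → s ≤ t → t ≤ T → ∀ i, |W t i - W s i| ≤ C0 * |t - s| ^ α)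
    (hWW : ∀ s t, 0 ≤ s → s ≤ t → t ≤ T → ∀ i j, |WW s t i j| ≤ C0 * |t - s| ^ (2*α))
    (hA' : ∀ s t, 0 ≤ s → s ≤ t → t ≤ T → ∀ i j,
      |A' t i j - A' s i j| ≤ C1 * |t - s| ^ α)
    (hA : ∀ s t, 0 ≤ s → s ≤ t → t ≤ T → ∀ l,
      |A t l - A s l - ∑ κ, A' s κ l * (W t κ - W s κ)| ≤ C2 * |t - s| ^ (2*α)) :
    ∃ (I : ℝ → ℝ) (C : ℝ), I 0 = 0 ∧
      (∀ s t, 0 ≤ s → s ≤ t → t ≤ T →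
        |I t - I s - germXi W WW A A' s t| ≤ C * |t - s| ^ (3*α)) ∧
      (∀ t, 0 ≤ t → t ≤ T → ∀ ε > (0:ℝ), ∃ δ > (0:ℝ),
        ∀ (k : ℕ) (π : Fin (k + 1) → ℝ), Monotone π →
          π 0 = 0 → π (Fin.last k) = t →
          (∀ i : Fin k, π i.succ - π i.castSucc < δ) →
          |(∑ i : Fin k, germXi W WW A A' (π i.castSucc) (π i.succ)) - I t| < ε) := by
  classical
  have hα0 : 0 < α := by linarith
  set γ : ℝ := 3*α with hγdef
  have hγ : 1 < γ := by rw [hγdef]; linarith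
  set Ξ : ℝ → ℝ → ℝ := germXi W WW A A' with hΞdef
  set K : ℝ := n*(|C2| * |C0|) + n^2*(|C1| * |C0|) with hKdef
  have hK : 0 ≤ K := by positivity
  -- WW vanishes on the diagonal
  have hWWzero : ∀ s, 0 ≤ s → s ≤ T → ∀ i j, WW s s i j = 0 := by
    intro s h0 h1 i j
    have h := hWW s s h0 (le_refl s) h1 i j
    rw [sub_self, abs_zero, Real.zero_rpow (by positivity : 2*α ≠ 0), mul_zero] at h
    exact abs_nonpos_iff.1 h
  have hz : ∀ s, 0 ≤ s → s ≤ T → Ξ s s = 0 := by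
    intro s h0 h1
    simp only [hΞdef, germXi, sub_self, mul_zero, Finset.sum_const_zero, zero_add]
    apply Finset.sum_eq_zero
    intro κ _
    apply Finset.sum_eq_zero
    intro l _
    rw [hWWzero s h0 h1, mul_zero]
  -- the coboundary estimate
  have hd : ∀ s u t, 0 ≤ s → s ≤ u → u ≤ t → t ≤ T →
      |Ξ s t - Ξ s u - Ξ u t| ≤ K * (t-s)^γ := by
    intro s u t hs hsu hut htT
    have hst : s ≤ t := le_trans hsu hut
    have hu0 : 0 ≤ u := le_trans hs hsu
    have hts0 : (0:ℝ) ≤ t - s := by linarith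
    have hc : ∀ κ l, WW s t κ l
        = WW s u κ l + WW u t κ l + (W u κ - W s κ) * (W t l - W u l) := by
      intro κ l; have := hChen s u t hs hsu hut htT κ l; linarith
    have key : Ξ s t - Ξ s u - Ξ u t
        = (∑ l, (-(A u l - A s l - ∑ κ, A' s κ l * (W u κ - W s κ))) * (W t l - W u l))
          + ∑ κ, ∑ l, (A' s κ l - A' u κ l) * WW u t κ l := by
      simp only [hΞdef, germXi]
      have e1 : ∑ κ, ∑ l, A' s κ l * WW s t κ l
          = (∑ κ, ∑ l, A' s κ l * WW s u κ l) + ((∑ κ, ∑ l, A' s κ l * WW u t κ l)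
            + ∑ κ, ∑ l, A' s κ l * ((W u κ - W s κ) * (W t l - W u l))) := by
        rw [← Finset.sum_add_distrib, ← Finset.sum_add_distrib]
        apply Finset.sum_congr rfl; intro κ _
        rw [← Finset.sum_add_distrib, ← Finset.sum_add_distrib]
        apply Finset.sum_congr rfl; intro l _
        rw [hc κ l]; ring
      rw [e1]
      have e2 : ∑ κ, ∑ l, A' s κ l * ((W u κ - W s κ) * (W t l - W u l))
          = ∑ l, (∑ κ, A' s κ l * (W u κ - W s κ)) * (W t l - W u l) := by
        rw [Finset.sum_comm]
        apply Finset.sum_congr rfl; intro l _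
        rw [Finset.sum_mul]
        apply Finset.sum_congr rfl; intro κ _; ring
      rw [e2]
      have e3 : ∑ κ, ∑ l, (A' s κ l - A' u κ l) * WW u t κ l
          = (∑ κ, ∑ l, A' s κ l * WW u t κ l) - ∑ κ, ∑ l, A' u κ l * WW u t κ l := by
        rw [← Finset.sum_sub_distrib]
        apply Finset.sum_congr rfl; intro κ _
        rw [← Finset.sum_sub_distrib]
        apply Finset.sum_congr rfl; intro l _; ring
      rw [e3]
      have e4 : (∑ κ, A s κ * (W t κ - W s κ)) - (∑ κ, A s κ * (W u κ - W s κ))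
            - (∑ κ, A u κ * (W t κ - W u κ))
            + ∑ l, (∑ κ, A' s κ l * (W u κ - W s κ)) * (W t l - W u l)
          = ∑ l, (-(A u l - A s l - ∑ κ, A' s κ l * (W u κ - W s κ))) * (W t l - W u l) := by
        rw [← Finset.sum_sub_distrib, ← Finset.sum_sub_distrib, ← Finset.sum_add_distrib]
        apply Finset.sum_congr rfl; intro l _; ring
      linarith [e4]
    rw [key]
    have hpow : (t-s)^(2*α) * (t-s)^α = (t-s)^γ := by
      rw [← Real.rpow_add' hts0 (by positivity : 2*α+α ≠ 0)]
      congr 1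
      rw [hγdef]; ring
    have hWb : ∀ l, |W t l - W u l| ≤ |C0| * (t-s)^α := by
      intro l
      refine le_trans (hW u t hu0 hut htT l) ?_
      rw [abs_of_nonneg (by linarith : (0:ℝ) ≤ t - u)]
      exact mul_le_mul (le_abs_self C0) (Real.rpow_le_rpow (by linarith) (by linarith) (by linarith))
        (Real.rpow_nonneg (by linarith) _) (abs_nonneg C0)
    have hAb : ∀ l, |(-(A u l - A s l - ∑ κ, A' s κ l * (W u κ - W s κ)))|
        ≤ |C2| * (t-s)^(2*α) := by
      intro l
      rw [abs_neg]
      refine le_trans (hA s u hs hsu (le_trans hut htT) l) ?_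
      rw [abs_of_nonneg (by linarith : (0:ℝ) ≤ u - s)]
      exact mul_le_mul (le_abs_self C2) (Real.rpow_le_rpow (by linarith) (by linarith) (by positivity))
        (Real.rpow_nonneg (by linarith) _) (abs_nonneg C2)
    have hA'b : ∀ κ l, |A' s κ l - A' u κ l| ≤ |C1| * (t-s)^α := by
      intro κ l
      rw [abs_sub_comm]
      refine le_trans (hA' s u hs hsu (le_trans hut htT) κ l) ?_
      rw [abs_of_nonneg (by linarith : (0:ℝ) ≤ u - s)]
      exact mul_le_mul (le_abs_self C1) (Real.rpow_le_rpow (by linarith) (by linarith) (by linarith))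
        (Real.rpow_nonneg (by linarith) _) (abs_nonneg C1)
    have hWWb : ∀ κ l, |WW u t κ l| ≤ |C0| * (t-s)^(2*α) := by
      intro κ l
      refine le_trans (hWW u t hu0 hut htT κ l) ?_
      rw [abs_of_nonneg (by linarith : (0:ℝ) ≤ t - u)]
      exact mul_le_mul (le_abs_self C0) (Real.rpow_le_rpow (by linarith) (by linarith) (by positivity))
        (Real.rpow_nonneg (by linarith) _) (abs_nonneg C0)
    have b1 : |∑ l, (-(A u l - A s l - ∑ κ, A' s κ l * (W u κ - W s κ))) * (W t l - W u l)|
        ≤ n * (|C2| * |C0|) * (t-s)^γ := by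
      refine le_trans (Finset.abs_sum_le_sum_abs _ _) ?_
      have hterm : ∀ l : Fin n, |(-(A u l - A s l - ∑ κ, A' s κ l * (W u κ - W s κ))) * (W t l - W u l)|
          ≤ (|C2| * |C0|) * (t-s)^γ := by
        intro l
        rw [abs_mul]
        calc |(-(A u l - A s l - ∑ κ, A' s κ l * (W u κ - W s κ)))| * |W t l - W u l|
            ≤ (|C2| * (t-s)^(2*α)) * (|C0| * (t-s)^α) := by
              apply mul_le_mul (hAb l) (hWb l) (abs_nonneg _) (by positivity)
          _ = (|C2| * |C0|) * ((t-s)^(2*α) * (t-s)^α) := by ring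
          _ = (|C2| * |C0|) * (t-s)^γ := by rw [hpow]
      refine le_trans (Finset.sum_le_sum (fun l _ => hterm l)) ?_
      rw [Finset.sum_const, Finset.card_univ, Fintype.card_fin, nsmul_eq_mul]
      ring_nf
      exact le_refl _
    have b2 : |∑ κ, ∑ l, (A' s κ l - A' u κ l) * WW u t κ l|
        ≤ n^2 * (|C1| * |C0|) * (t-s)^γ := by
      refine le_trans (Finset.abs_sum_le_sum_abs _ _) ?_
      have hterm : ∀ κ : Fin n, |∑ l, (A' s κ l - A' u κ l) * WW u t κ l|
          ≤ n * ((|C1| * |C0|) * (t-s)^γ) := by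
        intro κ
        refine le_trans (Finset.abs_sum_le_sum_abs _ _) ?_
        have hterm2 : ∀ l : Fin n, |(A' s κ l - A' u κ l) * WW u t κ l|
            ≤ (|C1| * |C0|) * (t-s)^γ := by
          intro l
          rw [abs_mul]
          calc |A' s κ l - A' u κ l| * |WW u t κ l|
              ≤ (|C1| * (t-s)^α) * (|C0| * (t-s)^(2*α)) := by
                apply mul_le_mul (hA'b κ l) (hWWb κ l) (abs_nonneg _) (by positivity)
            _ = (|C1| * |C0|) * ((t-s)^(2*α) * (t-s)^α) := by ring
            _ = (|C1| * |C0|) * (t-s)^γ := by rw [hpow]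
        refine le_trans (Finset.sum_le_sum (fun l _ => hterm2 l)) ?_
        rw [Finset.sum_const, Finset.card_univ, Fintype.card_fin, nsmul_eq_mul]
      refine le_trans (Finset.sum_le_sum (fun κ _ => hterm κ)) ?_
      rw [Finset.sum_const, Finset.card_univ, Fintype.card_fin, nsmul_eq_mul]
      ring_nf
      exact le_refl _
    calc |(∑ l, (-(A u l - A s l - ∑ κ, A' s κ l * (W u κ - W s κ))) * (W t l - W u l))
          + ∑ κ, ∑ l, (A' s κ l - A' u κ l) * WW u t κ l|
        ≤ |∑ l, (-(A u l - A s l - ∑ κ, A' s κ l * (W u κ - W s κ))) * (W t l - W u l)|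
          + |∑ κ, ∑ l, (A' s κ l - A' u κ l) * WW u t κ l| := abs_add_le _ _
      _ ≤ n * (|C2| * |C0|) * (t-s)^γ + n^2 * (|C1| * |C0|) * (t-s)^γ := add_le_add b1 b2
      _ = K * (t-s)^γ := by rw [hKdef]; ring
  -- analysis part
  set D : ℝ := K * sewC γ with hDdef
  have hD : 0 ≤ D := mul_nonneg hK sewC_nonneg
  set Sq : ℝ → ℕ → ℝ := fun t N => sewRS Ξ (fun j : ℕ => t*(j:ℝ)/((N:ℝ)+1)) (N+1) with hSqdef
  have hcomp : ∀ t, 0 ≤ t → t ≤ T → ∀ (k : ℕ) (π : ℕ → ℝ), (∀ i < k, π i ≤ π (i+1)) →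
      π 0 = 0 → π k = t → ∀ μ, 0 ≤ μ → (∀ i < k, π (i+1) - π i ≤ μ) → ∀ N,
      |sewRS Ξ π k - Sq t N| ≤ D * (μ^(γ-1)*t) + D * ((t/((N:ℝ)+1))^(γ-1)*t) := by
    intro t ht0 htT k π hm h0 hk μ hμ hmesh N
    exact sew_comp_unif Ξ T γ K hγ hK hz hd t ht0 htT k π hm h0 hk μ hμ hmesh N
  have hdivmono : ∀ t : ℝ, 0 ≤ t → ∀ (N m : ℕ), N ≤ m → t/((m:ℝ)+1) ≤ t/((N:ℝ)+1) := by
    intro t ht N m hNm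
    have h1 : (0:ℝ) < (N:ℝ)+1 := by positivity
    have h2 : (0:ℝ) < (m:ℝ)+1 := by positivity
    rw [div_le_div_iff₀ h2 h1]
    have h3 : ((N:ℝ)+1) ≤ (m:ℝ)+1 := by
      have := (Nat.cast_le (α := ℝ)).2 hNm
      linarith
    exact mul_le_mul_of_nonneg_left h3 ht
  have hmonopow : ∀ t : ℝ, 0 ≤ t → ∀ (N m : ℕ), N ≤ m →
      (t/((m:ℝ)+1))^(γ-1) ≤ (t/((N:ℝ)+1))^(γ-1) := by
    intro t ht N m hNm
    exact Real.rpow_le_rpow (by positivity) (hdivmono t ht N m hNm) (by linarith)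
  have hTend0 : ∀ t : ℝ, 0 ≤ t →
      Filter.Tendsto (fun N : ℕ => (t/((N:ℝ)+1))^(γ-1)) Filter.atTop (nhds 0) := by
    intro t ht
    have h1 : Filter.Tendsto (fun N : ℕ => t/((N:ℝ)+1)) Filter.atTop (nhds 0) := by
      have h2 := (tendsto_const_div_atTop_nhds_zero_nat t).comp (Filter.tendsto_add_atTop_nat 1)
      exact h2.congr (fun N => by simp only [Function.comp]; push_cast; ring)
    have h3 := h1.rpow_const (p := γ-1) (Or.inr (by linarith))
    rwa [Real.zero_rpow (by intro h; linarith : γ-1 ≠ 0)] at h3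
  have hEx : ∀ t : ℝ, ∃ L : ℝ,
      (0 ≤ t → t ≤ T → Filter.Tendsto (fun N => Sq t N) Filter.atTop (nhds L)) := by
    intro t
    by_cases hc : 0 ≤ t ∧ t ≤ T
    · obtain ⟨ht0, htT⟩ := hc
      have hcauchy : CauchySeq (fun N => Sq t N) := by
        apply cauchySeq_of_le_tendsto_0
          (b := fun N : ℕ => D*((t/((N:ℝ)+1))^(γ-1)*t) + D*((t/((N:ℝ)+1))^(γ-1)*t))
        · intro a b N hNa hNb
          rw [Real.dist_eq]
          have hmesh : ∀ i < a+1, (fun j : ℕ => t*(j:ℝ)/((a:ℝ)+1)) (i+1)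
              - (fun j : ℕ => t*(j:ℝ)/((a:ℝ)+1)) i ≤ t/((N:ℝ)+1) := by
            intro i _
            rw [sew_unif_step t a i]
            exact hdivmono t ht0 N a hNa
          have h := hcomp t ht0 htT (a+1) (fun j : ℕ => t*(j:ℝ)/((a:ℝ)+1))
            (sew_unif_mono t ht0 a) (sew_unif_zero t a) (sew_unif_last t a)
            (t/((N:ℝ)+1)) (by positivity) hmesh b
          refine le_trans h (add_le_add (le_refl _) ?_)
          exact mul_le_mul_of_nonneg_left
            (mul_le_mul_of_nonneg_right (hmonopow t ht0 N b hNb) ht0) hD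
        · have h := ((hTend0 t ht0).mul_const t).const_mul D
          have h2 := h.add h
          simpa using h2
      obtain ⟨L, hL⟩ := cauchySeq_tendsto_of_complete hcauchy
      exact ⟨L, fun _ _ => hL⟩
    · exact ⟨0, fun h1 h2 => absurd ⟨h1, h2⟩ hc⟩
  choose I hI using hEx
  have hconv : ∀ t, 0 ≤ t → t ≤ T → ∀ (k : ℕ) (π : ℕ → ℝ), (∀ i < k, π i ≤ π (i+1)) →
      π 0 = 0 → π k = t → ∀ μ, 0 ≤ μ → (∀ i < k, π (i+1) - π i ≤ μ) →
      |sewRS Ξ π k - I t| ≤ D * (μ^(γ-1)*t) := by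
    intro t ht0 htT k π hm h0 hk μ hμ hmesh
    have hlim := hI t ht0 htT
    have hf : Filter.Tendsto (fun N => |sewRS Ξ π k - Sq t N|) Filter.atTop
        (nhds (|sewRS Ξ π k - I t|)) := (Filter.Tendsto.sub tendsto_const_nhds hlim).abs
    have hg : Filter.Tendsto (fun N : ℕ => D*(μ^(γ-1)*t) + D*((t/((N:ℝ)+1))^(γ-1)*t))
        Filter.atTop (nhds (D*(μ^(γ-1)*t))) := by
      have h2 : Filter.Tendsto (fun N : ℕ => D*((t/((N:ℝ)+1))^(γ-1)*t)) Filter.atTop (nhds 0) := by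
        simpa using ((hTend0 t ht0).mul_const t).const_mul D
      simpa using (tendsto_const_nhds (x := D*(μ^(γ-1)*t)) (f := Filter.atTop (α := ℕ))).add h2
    exact le_of_tendsto_of_tendsto' hf hg (fun N => hcomp t ht0 htT k π hm h0 hk μ hμ hmesh N)
  refine ⟨I, D, ?_, ?_, ?_⟩
  · -- I 0 = 0
    have hSq0 : ∀ N, Sq 0 N = 0 := by
      intro N
      simp only [hSqdef, sewRS]
      apply Finset.sum_eq_zero
      intro j _
      have e : ∀ m : ℕ, (0:ℝ)*(m:ℝ)/((N:ℝ)+1) = 0 := by intro m; ring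
      rw [e j, e (j+1)]
      exact hz 0 (le_refl _) (le_of_lt hT)
    have h1 := hI 0 (le_refl _) (le_of_lt hT)
    have h2 : Filter.Tendsto (fun N => Sq 0 N) Filter.atTop (nhds 0) :=
      (Filter.tendsto_congr (fun N => (hSq0 N).symm)).1 tendsto_const_nhds
    exact tendsto_nhds_unique h1 h2
  · -- local estimate
    intro s t hs0 hst htT
    have ht0 : 0 ≤ t := le_trans hs0 hst
    have hsT : s ≤ T := le_trans hst htT
    set V : ℕ → ℕ → ℝ := fun N a => s + (t-s)*(a:ℝ)/((N:ℝ)+1) with hVdef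
    set cc : ℕ → ℕ → ℝ := fun N j => if j < N+1 then s*(j:ℝ)/((N:ℝ)+1)
      else s + (t-s)*((j:ℝ)-((N:ℝ)+1))/((N:ℝ)+1) with hccdef
    have hNne : ∀ N : ℕ, ((N:ℝ)+1) ≠ 0 := fun N => by positivity
    have hV0 : ∀ N, V N 0 = s := by intro N; simp [hVdef]
    have hVlast : ∀ N, V N (N+1) = t := by
      intro N
      simp only [hVdef]
      push_cast
      field_simp
      ring
    have hVstep : ∀ N a, V N (a+1) - V N a = (t-s)/((N:ℝ)+1) := by
      intro N a
      simp only [hVdef]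
      push_cast
      field_simp
      ring
    have hVmono : ∀ N, ∀ a < N+1, V N a ≤ V N (a+1) := by
      intro N a _
      have h := hVstep N a
      have h2 : (0:ℝ) ≤ (t-s)/((N:ℝ)+1) := by
        apply div_nonneg (by linarith) (by positivity)
      rw [← h] at h2
      exact sub_nonneg.1 h2
    have hcc1 : ∀ N, ∀ j ≤ N+1, cc N j = s*(j:ℝ)/((N:ℝ)+1) := by
      intro N j hj
      simp only [hccdef]
      by_cases h : j < N+1
      · rw [if_pos h]
      · have hj' : j = N+1 := by omega
        subst hj'
        rw [if_neg h]
        push_cast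
        field_simp
        ring
    have hcc2 : ∀ N a, cc N (N+1+a) = V N a := by
      intro N a
      simp only [hccdef, hVdef]
      rw [if_neg (by omega)]
      push_cast
      ring_nf
    have h0cc : ∀ N, cc N 0 = 0 := by
      intro N
      rw [hcc1 N 0 (by omega)]
      simp
    have hlastcc : ∀ N, cc N (N+1+(N+1)) = t := by
      intro N
      have e : cc N (N+1+(N+1)) = V N (N+1) := hcc2 N (N+1)
      rw [e, hVlast]
    have hccstep : ∀ N, ∀ j < N+1+(N+1),
        0 ≤ cc N (j+1) - cc N j ∧ cc N (j+1) - cc N j ≤ t/((N:ℝ)+1) := by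
      intro N j hj
      by_cases h : j < N+1
      · have e : cc N (j+1) - cc N j = s/((N:ℝ)+1) := by
          rw [hcc1 N (j+1) (by omega), hcc1 N j (by omega)]
          push_cast
          field_simp
          ring
        rw [e]
        constructor
        · positivity
        · gcongr
      · have ha : ∃ a, j = N+1+a := ⟨j - (N+1), by omega⟩
        obtain ⟨a, rfl⟩ := ha
        have e1 : cc N (N+1+a+1) = V N (a+1) := hcc2 N (a+1)
        have e2 : cc N (N+1+a) = V N a := hcc2 N a
        rw [e1, e2, hVstep N a]
        constructor
        · apply div_nonneg (by linarith) (by positivity)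
        · gcongr
          linarith
    have hcc_tendsto : Filter.Tendsto (fun N => sewRS Ξ (cc N) (N+1+(N+1)))
        Filter.atTop (nhds (I t)) := by
      have hb : ∀ N, |sewRS Ξ (cc N) (N+1+(N+1)) - I t| ≤ D * ((t/((N:ℝ)+1))^(γ-1)*t) := by
        intro N
        exact hconv t ht0 htT (N+1+(N+1)) (cc N)
          (fun i hi => by linarith [(hccstep N i hi).1])
          (h0cc N) (hlastcc N) (t/((N:ℝ)+1)) (by positivity)
          (fun i hi => (hccstep N i hi).2)
      have h0 : Filter.Tendsto (fun N => sewRS Ξ (cc N) (N+1+(N+1)) - I t)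
          Filter.atTop (nhds 0) := by
        refine squeeze_zero_norm (a := fun N : ℕ => D*((t/((N:ℝ)+1))^(γ-1)*t))
          (fun N => ?_) ?_
        · rw [Real.norm_eq_abs]; exact hb N
        · simpa using ((hTend0 t ht0).mul_const t).const_mul D
      have h1 := h0.add (tendsto_const_nhds (x := I t) (f := Filter.atTop (α := ℕ)))
      simpa using h1
    have hsplit : ∀ N, sewRS Ξ (cc N) (N+1+(N+1)) = Sq s N + sewRS Ξ (V N) (N+1) := by
      intro N
      simp only [sewRS, hSqdef]
      rw [Finset.range_eq_Ico,
        ← Finset.sum_Ico_consecutive _ (Nat.zero_le (N+1)) (by omega : N+1 ≤ N+1+(N+1))]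
      congr 1
      · rw [← Finset.range_eq_Ico]
        apply Finset.sum_congr rfl
        intro j hj
        rw [Finset.mem_range] at hj
        rw [hcc1 N j (by omega), hcc1 N (j+1) (by omega)]
      · rw [Finset.sum_Ico_eq_sum_range]
        rw [show N+1+(N+1) - (N+1) = N+1 by omega]
        apply Finset.sum_congr rfl
        intro a _
        have e1 : cc N (N+1+a+1) = V N (a+1) := hcc2 N (a+1)
        have e2 : cc N (N+1+a) = V N a := hcc2 N a
        rw [e1, e2]
    have hVtendsto : Filter.Tendsto (fun N => sewRS Ξ (V N) (N+1))
        Filter.atTop (nhds (I t - I s)) := by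
      have h := hcc_tendsto.sub (hI s hs0 hsT)
      exact h.congr (fun N => by rw [hsplit N]; ring)
    have hbound : ∀ N, |sewRS Ξ (V N) (N+1) - Ξ s t| ≤ D * (t-s)^γ := by
      intro N
      have h := sew_maximal' Ξ T γ K hγ hK hz hd (N+1) (V N) (hVmono N)
        (by rw [hV0]; exact hs0) (by rw [hVlast]; exact htT)
      rw [hV0, hVlast] at h
      exact h
    have hfinal : |I t - I s - Ξ s t| ≤ D * (t-s)^γ := by
      have hten : Filter.Tendsto (fun N => |sewRS Ξ (V N) (N+1) - Ξ s t|)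
          Filter.atTop (nhds (|I t - I s - Ξ s t|)) :=
        (hVtendsto.sub tendsto_const_nhds).abs
      exact le_of_tendsto hten (Filter.Eventually.of_forall hbound)
    rw [abs_of_nonneg (by linarith : (0:ℝ) ≤ t - s)]
    exact hfinal
  · -- convergence of Riemann sums
    intro t ht0 htT ε hε
    have hDt1 : (0:ℝ) < D*t + 1 := by positivity
    set δ : ℝ := (ε/(D*t+1))^((1:ℝ)/(γ-1)) with hδdef
    have hδpos : 0 < δ := Real.rpow_pos_of_pos (by positivity) _
    refine ⟨δ, hδpos, ?_⟩
    intro k π hmonoF h0F hlastF hmeshF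
    set πh : ℕ → ℝ := fun j => π ⟨min j k, by omega⟩ with hπh
    have hπh_eq : ∀ (i : ℕ), i ≤ k → ∀ (h : i < k+1), πh i = π ⟨i, h⟩ := by
      intro i hik h
      simp only [hπh]
      apply congrArg π
      apply Fin.ext
      simp [Nat.min_eq_left hik]
    have hstep : ∀ i < k, πh i ≤ πh (i+1) := by
      intro i hi
      rw [hπh_eq i (by omega) (by omega), hπh_eq (i+1) (by omega) (by omega)]
      apply hmonoF
      simp [Fin.le_def]
    have h0' : πh 0 = 0 := by
      rw [hπh_eq 0 (by omega) (by omega)]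
      have e : (⟨0, by omega⟩ : Fin (k+1)) = 0 := by
        apply Fin.ext; simp
      rw [e]; exact h0F
    have hlast' : πh k = t := by
      rw [hπh_eq k (le_refl _) (by omega)]
      have e : (⟨k, by omega⟩ : Fin (k+1)) = Fin.last k := by
        apply Fin.ext; simp [Fin.last]
      rw [e]; exact hlastF
    have hmesh' : ∀ i < k, πh (i+1) - πh i ≤ δ := by
      intro i hi
      rw [hπh_eq (i+1) (by omega) (by omega), hπh_eq i (by omega) (by omega)]
      have h := hmeshF ⟨i, hi⟩
      have e1 : (⟨i, hi⟩ : Fin k).succ = (⟨i+1, by omega⟩ : Fin (k+1)) := by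
        apply Fin.ext; simp
      have e2 : (⟨i, hi⟩ : Fin k).castSucc = (⟨i, by omega⟩ : Fin (k+1)) := by
        apply Fin.ext; simp
      rw [e1, e2] at h
      linarith
    have hsum : (∑ i : Fin k, Ξ (π i.castSucc) (π i.succ)) = sewRS Ξ πh k := by
      rw [sewRS, ← Fin.sum_univ_eq_sum_range (fun j => Ξ (πh j) (πh (j+1))) k]
      apply Finset.sum_congr rfl
      intro i _
      congr 1
      · rw [hπh_eq i.val (le_of_lt i.isLt) (by omega)]
        apply congrArg π
        apply Fin.ext
        simp
      · rw [hπh_eq (i.val+1) (by omega) (by omega)]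
        apply congrArg π
        apply Fin.ext
        simp
    rw [hsum]
    have hb := hconv t ht0 htT k πh hstep h0' hlast' δ (le_of_lt hδpos) hmesh'
    have hδpow : δ^(γ-1) = ε/(D*t+1) := by
      rw [hδdef, ← Real.rpow_mul (by positivity : (0:ℝ) ≤ ε/(D*t+1)),
        one_div_mul_cancel (by intro h; linarith : γ-1 ≠ 0), Real.rpow_one]
    calc |sewRS Ξ πh k - I t| ≤ D * (δ^(γ-1)*t) := hb
      _ = D*t*(ε/(D*t+1)) := by rw [hδpow]; ring
      _ < ε := by
          have h2 : D*t < D*t+1 := by linarith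
          calc D*t*(ε/(D*t+1)) < (D*t+1)*(ε/(D*t+1)) := by
                apply mul_lt_mul_of_pos_right h2 (by positivity)
            _ = ε := by field_simp
end

section
/- Let f : ℝ^d × P_2(ℝ^d) → ℝ be such that for each x the map μ ↦ f(x, μ) is continuously L-differentiable with L-derivative ∂_μ f(x, μ)(v) bounded by M and Lipschitz with constant L in (μ, v), and for each μ the map x ↦ f(x, μ) is measurable and bounded. Then for any two curves μ, ν ∈ P_2(ℝ^d) and any coupling realized by random variables (X_t, X_s) with laws μ_t, μ_s: |f(x, μ_t) − f(x, μ_s) − E[∂_μ f(x, μ_s)(X_s) · (X_t − X_s)]| ≤ 2L ‖X_t − X_s‖²_{L²}, uniformly in x. -/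
open MeasureTheory
open scoped ENNReal RealInnerProductSpace

/-- The `p`-Wasserstein distance, as an infimum over couplings. -/
noncomputable def wassersteinDist (p : ℝ) {E : Type*} [MeasurableSpace E]
    [NormedAddCommGroup E] (μ ν : Measure E) : ℝ≥0∞ :=
  ⨅ π : {π : Measure (E × E) // π.map Prod.fst = μ ∧ π.map Prod.snd = ν},
    (∫⁻ zw, ENNReal.ofReal (‖zw.1 - zw.2‖ ^ p) ∂(π.1)) ^ (1 / p)

lemma W2_map_le {d : ℕ} {Ω : Type*} [MeasurableSpace Ω] (P : Measure Ω) [IsProbabilityMeasure P]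
    (a b : Ω → EuclideanSpace ℝ (Fin d)) (ha : Measurable a) (hb : Measurable b)
    (hab : Integrable (fun ω => ‖a ω - b ω‖ ^ 2) P) :
    (wassersteinDist 2 (P.map a) (P.map b)).toReal ≤ Real.sqrt (∫ ω, ‖a ω - b ω‖ ^ 2 ∂P) := by
  set I := ∫ ω, ‖a ω - b ω‖ ^ 2 ∂P with hIdef
  have hI : 0 ≤ I := integral_nonneg fun ω => by positivity
  refine ENNReal.toReal_le_of_le_ofReal (Real.sqrt_nonneg _) ?_
  have hmeas : Measurable fun ω => (a ω, b ω) := ha.prodMk hb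
  have hmar1 : (P.map fun ω => (a ω, b ω)).map Prod.fst = P.map a := by
    rw [Measure.map_map measurable_fst hmeas]; rfl
  have hmar2 : (P.map fun ω => (a ω, b ω)).map Prod.snd = P.map b := by
    rw [Measure.map_map measurable_snd hmeas]; rfl
  refine le_trans (iInf_le _ ⟨P.map fun ω => (a ω, b ω), hmar1, hmar2⟩) ?_
  have hm2 : Measurable fun zw : EuclideanSpace ℝ (Fin d) × EuclideanSpace ℝ (Fin d) =>
      ENNReal.ofReal (‖zw.1 - zw.2‖ ^ (2:ℝ)) :=
    ((measurable_fst.sub measurable_snd).norm.pow_const _).ennreal_ofReal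
  rw [lintegral_map hm2 hmeas]
  have heq : (∫⁻ ω, ENNReal.ofReal (‖a ω - b ω‖ ^ (2:ℝ)) ∂P) = ENNReal.ofReal I := by
    rw [hIdef, ofReal_integral_eq_lintegral_ofReal hab (ae_of_all _ fun ω => by positivity)]
    congr 1; funext ω
    rw [← Real.rpow_natCast (‖a ω - b ω‖) 2]; norm_num
  rw [heq, ENNReal.ofReal_rpow_of_nonneg hI (by norm_num), Real.sqrt_eq_rpow]


/-- uniform-in-`x` Taylor remainder: let `f(x, ·)` be continuously
L-differentiable for each `x` (encoded by the mean value representation `hMVT` of the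
Fréchet derivative of its lift), with L-derivative `D x μ v = ∂_μ f(x,μ)(v)` bounded by
`M` and `L`-Lipschitz in `(μ, v)`. Then for random variables `Xt, Xs` with laws
`μ_t, μ_s`, uniformly in `x`,
`|f(x, μ_t) − f(x, μ_s) − E[∂_μ f(x, μ_s)(X_s)·(X_t − X_s)]| ≤ 2L‖X_t − X_s‖²_{L²}`. -/
theorem stmt_19 {d : ℕ} {Ω : Type*} [MeasurableSpace Ω]
    (P : Measure Ω) [IsProbabilityMeasure P]
    (f : EuclideanSpace ℝ (Fin d) → Measure (EuclideanSpace ℝ (Fin d)) → ℝ)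
    (D : EuclideanSpace ℝ (Fin d) → Measure (EuclideanSpace ℝ (Fin d)) →
      EuclideanSpace ℝ (Fin d) → EuclideanSpace ℝ (Fin d))
    (M L : ℝ) (hM : ∀ x ν v, ‖D x ν v‖ ≤ M) (hL : 0 ≤ L)
    (hLip : ∀ x, ∀ (ν ν' : Measure (EuclideanSpace ℝ (Fin d))),
      IsProbabilityMeasure ν → IsProbabilityMeasure ν' →
      ∀ v v' : EuclideanSpace ℝ (Fin d),
      ‖D x ν v - D x ν' v'‖ ≤ L * ((wassersteinDist 2 ν ν').toReal + ‖v - v'‖))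
    (hbdd : ∀ x ν, |f x ν| ≤ M)
    (hMVT : ∀ x, ∀ X Y : Ω → EuclideanSpace ℝ (Fin d),
      Measurable X → Measurable Y → MemLp X 2 P → MemLp Y 2 P →
      f x (P.map Y) - f x (P.map X) =
        ∫ θ in (0:ℝ)..1, ∫ ω,
          ⟪D x (P.map (fun ω' => X ω' + θ • (Y ω' - X ω')))
              (X ω + θ • (Y ω - X ω)), Y ω - X ω⟫ ∂P)
    (Xt Xs : Ω → EuclideanSpace ℝ (Fin d))
    (hXt : Measurable Xt) (hXs : Measurable Xs)
    (hXt2 : MemLp Xt 2 P) (hXs2 : MemLp Xs 2 P) :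
    ∀ x, |f x (P.map Xt) - f x (P.map Xs)
            - ∫ ω, ⟪D x (P.map Xs) (Xs ω), Xt ω - Xs ω⟫ ∂P|
      ≤ 2 * L * (∫ ω, ‖Xt ω - Xs ω‖ ^ 2 ∂P) := by
  intro x
  have hg : Measurable (fun ω => Xt ω - Xs ω) := hXt.sub hXs
  have hg2 : MemLp (fun ω => Xt ω - Xs ω) 2 P := hXt2.sub hXs2
  have hI2int : Integrable (fun ω => ‖Xt ω - Xs ω‖ ^ 2) P := by
    have h := hg2.integrable_norm_rpow (by norm_num) (by norm_num)
    simpa [ENNReal.toReal_ofNat, Real.rpow_two] using h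
  have hI2 : 0 ≤ ∫ ω, ‖Xt ω - Xs ω‖ ^ 2 ∂P := integral_nonneg fun ω => by positivity
  set S := Real.sqrt (∫ ω, ‖Xt ω - Xs ω‖ ^ 2 ∂P) with hSdef
  have hS : 0 ≤ S := Real.sqrt_nonneg _
  have hSS : S * S = ∫ ω, ‖Xt ω - Xs ω‖ ^ 2 ∂P := Real.mul_self_sqrt hI2
  have hgInt : Integrable (fun ω => ‖Xt ω - Xs ω‖) P := by
    have h1 : MemLp (fun ω => Xt ω - Xs ω) 1 P := hg2.mono_exponent (by norm_num)
    exact (memLp_one_iff_integrable.mp h1).norm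
  have hgI : 0 ≤ ∫ ω, ‖Xt ω - Xs ω‖ ∂P := integral_nonneg fun ω => norm_nonneg _
  -- Cauchy–Schwarz
  have hCS : (∫ ω, ‖Xt ω - Xs ω‖ ∂P) ≤ S := by
    have hpq : (2:ℝ).HolderConjugate 2 := ⟨by norm_num, by norm_num, by norm_num⟩
    have hone : MemLp (fun _ : Ω => (1:ℝ)) (ENNReal.ofReal 2) P := memLp_const _
    have hnn : MemLp (fun ω => ‖Xt ω - Xs ω‖) (ENNReal.ofReal 2) P := by
      have : (ENNReal.ofReal 2) = 2 := by norm_num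
      rw [this]; exact hg2.norm
    have h := integral_mul_le_Lp_mul_Lq_of_nonneg hpq
      (ae_of_all _ fun ω => norm_nonneg (Xt ω - Xs ω))
      (ae_of_all _ fun _ => (zero_le_one : (0:ℝ) ≤ 1)) hnn hone
    simp only [mul_one, Real.one_rpow, Real.rpow_two, integral_const, measure_univ,
      ENNReal.toReal_one, smul_eq_mul, one_mul, one_pow, probReal_univ] at h
    calc (∫ ω, ‖Xt ω - Xs ω‖ ∂P)
        ≤ (∫ ω, ‖Xt ω - Xs ω‖ ^ 2 ∂P) ^ ((1:ℝ)/2) := h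
      _ = S := by rw [hSdef, Real.sqrt_eq_rpow]
  -- notation for the interpolation curve
  have hYm : ∀ θ : ℝ, Measurable (fun ω => Xs ω + θ • (Xt ω - Xs ω)) :=
    fun θ => hXs.add (hg.const_smul θ)
  have hY2 : ∀ θ : ℝ, MemLp (fun ω => Xs ω + θ • (Xt ω - Xs ω)) 2 P :=
    fun θ => hXs2.add (hg2.const_smul θ)
  have hprob : ∀ θ : ℝ,
      IsProbabilityMeasure (P.map (fun ω => Xs ω + θ • (Xt ω - Xs ω))) :=
    fun θ => Measure.isProbabilityMeasure_map (hYm θ).aemeasurable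
  have hprobXs : IsProbabilityMeasure (P.map Xs) := Measure.isProbabilityMeasure_map hXs.aemeasurable
  have hYdiff : ∀ θ θ' : ℝ, ∀ ω,
      (Xs ω + θ • (Xt ω - Xs ω)) - (Xs ω + θ' • (Xt ω - Xs ω)) = (θ - θ') • (Xt ω - Xs ω) := by
    intro θ θ' ω; rw [add_sub_add_left_eq_sub, ← sub_smul]
  -- Wasserstein bound along the curve
  have hW : ∀ θ θ' : ℝ,
      (wassersteinDist 2 (P.map (fun ω => Xs ω + θ • (Xt ω - Xs ω)))
        (P.map (fun ω => Xs ω + θ' • (Xt ω - Xs ω)))).toReal ≤ |θ - θ'| * S := by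
    intro θ θ'
    have hre : (fun ω => ‖(Xs ω + θ • (Xt ω - Xs ω)) - (Xs ω + θ' • (Xt ω - Xs ω))‖ ^ 2)
        = fun ω => (θ - θ') ^ 2 * ‖Xt ω - Xs ω‖ ^ 2 := by
      funext ω; rw [hYdiff θ θ' ω, norm_smul, mul_pow, Real.norm_eq_abs, sq_abs]
    have hint : Integrable (fun ω =>
        ‖(Xs ω + θ • (Xt ω - Xs ω)) - (Xs ω + θ' • (Xt ω - Xs ω))‖ ^ 2) P := by
      rw [hre]; exact hI2int.const_mul _
    refine le_trans (W2_map_le P _ _ (hYm θ) (hYm θ') hint) ?_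
    rw [hre, integral_const_mul, Real.sqrt_mul (sq_nonneg _), Real.sqrt_sq_eq_abs]
  have hWzero : ∀ (h : Ω → EuclideanSpace ℝ (Fin d)), Measurable h →
      (wassersteinDist 2 (P.map h) (P.map h)).toReal = 0 := by
    intro h hm
    have hint : Integrable (fun ω => ‖h ω - h ω‖ ^ 2) P := by
      simpa using (integrable_const (0:ℝ) : Integrable (fun _ : Ω => (0:ℝ)) P)
    have := W2_map_le P h h hm hm hint
    simp only [sub_self, norm_zero] at this
    have h0 : (∫ ω, (0:ℝ) ^ 2 ∂P) = 0 := by simp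
    rw [h0, Real.sqrt_zero] at this
    exact le_antisymm this ENNReal.toReal_nonneg
  -- continuity (Lipschitz) of v ↦ D x ν v
  have hDc : ∀ ν : Measure (EuclideanSpace ℝ (Fin d)), IsProbabilityMeasure ν →
      (wassersteinDist 2 ν ν).toReal = 0 → Continuous (fun v => D x ν v) := by
    intro ν hν hzero
    have hlip : LipschitzWith (Real.toNNReal L) (fun v => D x ν v) := by
      apply LipschitzWith.of_dist_le_mul
      intro v v'
      rw [dist_eq_norm, dist_eq_norm, Real.coe_toNNReal L hL]
      calc ‖D x ν v - D x ν v'‖ ≤ L * ((wassersteinDist 2 ν ν).toReal + ‖v - v'‖) :=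
            hLip x ν ν hν hν v v'
        _ = L * ‖v - v'‖ := by rw [hzero, zero_add]
    exact hlip.continuous
  -- integrability of inner products
  have hInt : ∀ ν : Measure (EuclideanSpace ℝ (Fin d)), Continuous (fun v => D x ν v) →
      ∀ h : Ω → EuclideanSpace ℝ (Fin d), Measurable h →
      Integrable (fun ω => ⟪D x ν (h ω), Xt ω - Xs ω⟫) P := by
    intro ν hc h hm
    have hmeas : AEStronglyMeasurable (fun ω => ⟪D x ν (h ω), Xt ω - Xs ω⟫) P :=
      ((hc.measurable.comp hm).inner hg).aestronglyMeasurable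
    refine Integrable.mono' (hgInt.const_mul M) hmeas (ae_of_all _ fun ω => ?_)
    calc ‖⟪D x ν (h ω), Xt ω - Xs ω⟫‖ ≤ ‖D x ν (h ω)‖ * ‖Xt ω - Xs ω‖ :=
          norm_inner_le_norm _ _
      _ ≤ M * ‖Xt ω - Xs ω‖ := mul_le_mul_of_nonneg_right (hM x ν _) (norm_nonneg _)
  -- the function of θ
  set F : ℝ → ℝ := fun θ => ∫ ω,
      ⟪D x (P.map (fun ω' => Xs ω' + θ • (Xt ω' - Xs ω')))
        (Xs ω + θ • (Xt ω - Xs ω)), Xt ω - Xs ω⟫ ∂P with hFdef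
  set K : ℝ := L * (S * (∫ ω, ‖Xt ω - Xs ω‖ ∂P) + (∫ ω, ‖Xt ω - Xs ω‖ ^ 2 ∂P)) with hKdef
  have hK : 0 ≤ K := mul_nonneg hL (add_nonneg (mul_nonneg hS hgI) hI2)
  -- Lipschitz estimate for F
  have hFlip : ∀ θ θ' : ℝ, |F θ - F θ'| ≤ K * |θ - θ'| := by
    intro θ θ'
    have hc1 : Continuous (fun v => D x (P.map (fun ω => Xs ω + θ • (Xt ω - Xs ω))) v) :=
      hDc _ (hprob θ) (hWzero _ (hYm θ))
    have hc2 : Continuous (fun v => D x (P.map (fun ω => Xs ω + θ' • (Xt ω - Xs ω))) v) :=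
      hDc _ (hprob θ') (hWzero _ (hYm θ'))
    have hint1 := hInt _ hc1 _ (hYm θ)
    have hint2 := hInt _ hc2 _ (hYm θ')
    have hsub : F θ - F θ' = ∫ ω,
        (⟪D x (P.map (fun ω' => Xs ω' + θ • (Xt ω' - Xs ω')))
            (Xs ω + θ • (Xt ω - Xs ω)), Xt ω - Xs ω⟫
          - ⟪D x (P.map (fun ω' => Xs ω' + θ' • (Xt ω' - Xs ω')))
            (Xs ω + θ' • (Xt ω - Xs ω)), Xt ω - Xs ω⟫) ∂P := by
      rw [hFdef]; exact (integral_sub hint1 hint2).symm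
    rw [hsub]
    have hbddInt : Integrable (fun ω =>
        L * |θ - θ'| * (S * ‖Xt ω - Xs ω‖ + ‖Xt ω - Xs ω‖ ^ 2)) P :=
      ((hgInt.const_mul S).add hI2int).const_mul (L * |θ - θ'|)
    have hptw : ∀ ω, ‖(⟪D x (P.map (fun ω' => Xs ω' + θ • (Xt ω' - Xs ω')))
            (Xs ω + θ • (Xt ω - Xs ω)), Xt ω - Xs ω⟫
          - ⟪D x (P.map (fun ω' => Xs ω' + θ' • (Xt ω' - Xs ω')))
            (Xs ω + θ' • (Xt ω - Xs ω)), Xt ω - Xs ω⟫)‖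
        ≤ L * |θ - θ'| * (S * ‖Xt ω - Xs ω‖ + ‖Xt ω - Xs ω‖ ^ 2) := by
      intro ω
      rw [← inner_sub_left]
      calc ‖⟪D x (P.map (fun ω' => Xs ω' + θ • (Xt ω' - Xs ω')))
            (Xs ω + θ • (Xt ω - Xs ω))
          - D x (P.map (fun ω' => Xs ω' + θ' • (Xt ω' - Xs ω')))
            (Xs ω + θ' • (Xt ω - Xs ω)), Xt ω - Xs ω⟫‖
          ≤ ‖D x (P.map (fun ω' => Xs ω' + θ • (Xt ω' - Xs ω')))
            (Xs ω + θ • (Xt ω - Xs ω))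
          - D x (P.map (fun ω' => Xs ω' + θ' • (Xt ω' - Xs ω')))
            (Xs ω + θ' • (Xt ω - Xs ω))‖ * ‖Xt ω - Xs ω‖ := norm_inner_le_norm _ _
        _ ≤ (L * ((wassersteinDist 2 (P.map (fun ω' => Xs ω' + θ • (Xt ω' - Xs ω')))
              (P.map (fun ω' => Xs ω' + θ' • (Xt ω' - Xs ω')))).toReal
            + ‖(Xs ω + θ • (Xt ω - Xs ω)) - (Xs ω + θ' • (Xt ω - Xs ω))‖)) * ‖Xt ω - Xs ω‖ :=
            mul_le_mul_of_nonneg_right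
              (hLip x _ _ (hprob θ) (hprob θ') _ _) (norm_nonneg _)
        _ ≤ (L * (|θ - θ'| * S + |θ - θ'| * ‖Xt ω - Xs ω‖)) * ‖Xt ω - Xs ω‖ := by
            refine mul_le_mul_of_nonneg_right (mul_le_mul_of_nonneg_left ?_ hL) (norm_nonneg _)
            have h1 := hW θ θ'
            have h2 : ‖(Xs ω + θ • (Xt ω - Xs ω)) - (Xs ω + θ' • (Xt ω - Xs ω))‖
                = |θ - θ'| * ‖Xt ω - Xs ω‖ := by
              rw [hYdiff θ θ' ω, norm_smul, Real.norm_eq_abs]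
            rw [h2]
            exact add_le_add h1 le_rfl
        _ = L * |θ - θ'| * (S * ‖Xt ω - Xs ω‖ + ‖Xt ω - Xs ω‖ ^ 2) := by ring
    calc ‖∫ ω, (⟪D x (P.map (fun ω' => Xs ω' + θ • (Xt ω' - Xs ω')))
            (Xs ω + θ • (Xt ω - Xs ω)), Xt ω - Xs ω⟫
          - ⟪D x (P.map (fun ω' => Xs ω' + θ' • (Xt ω' - Xs ω')))
            (Xs ω + θ' • (Xt ω - Xs ω)), Xt ω - Xs ω⟫) ∂P‖
        ≤ ∫ ω, L * |θ - θ'| * (S * ‖Xt ω - Xs ω‖ + ‖Xt ω - Xs ω‖ ^ 2) ∂P :=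
          norm_integral_le_of_norm_le hbddInt (ae_of_all _ hptw)
      _ = K * |θ - θ'| := by
          rw [integral_const_mul, integral_add (hgInt.const_mul S) hI2int,
            integral_const_mul, hKdef]; ring
  have hFcont : Continuous F := by
    have : LipschitzWith (Real.toNNReal K) F := by
      apply LipschitzWith.of_dist_le_mul
      intro θ θ'
      rw [Real.dist_eq, Real.dist_eq, Real.coe_toNNReal K hK]
      exact hFlip θ θ'
    exact this.continuous
  have hFint : IntervalIntegrable F volume 0 1 := hFcont.intervalIntegrable 0 1
  have hmvt : f x (P.map Xt) - f x (P.map Xs) = ∫ θ in (0:ℝ)..1, F θ :=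
    hMVT x Xs Xt hXs hXt hXs2 hXt2
  have hC : F 0 = ∫ ω, ⟪D x (P.map Xs) (Xs ω), Xt ω - Xs ω⟫ ∂P := by
    rw [hFdef]; simp
  rw [hmvt, ← hC]
  have h1 : (∫ θ in (0:ℝ)..1, (F θ - F 0)) = (∫ θ in (0:ℝ)..1, F θ) - F 0 := by
    rw [intervalIntegral.integral_sub hFint intervalIntegrable_const]; simp
  rw [← h1]
  have hbound : ∀ θ ∈ Set.uIoc (0:ℝ) 1, ‖F θ - F 0‖ ≤ 2 * L * (∫ ω, ‖Xt ω - Xs ω‖ ^ 2 ∂P) := by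
    intro θ hθ
    rw [Set.uIoc_of_le zero_le_one] at hθ
    obtain ⟨hθ0, hθ1⟩ := hθ
    calc ‖F θ - F 0‖ ≤ K * |θ - 0| := hFlip θ 0
      _ = K * θ := by rw [sub_zero, abs_of_pos hθ0]
      _ ≤ K * 1 := mul_le_mul_of_nonneg_left hθ1 hK
      _ = K := mul_one K
      _ ≤ 2 * L * (∫ ω, ‖Xt ω - Xs ω‖ ^ 2 ∂P) := by
          rw [hKdef]
          have hSg : S * (∫ ω, ‖Xt ω - Xs ω‖ ∂P) ≤ ∫ ω, ‖Xt ω - Xs ω‖ ^ 2 ∂P := by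
            calc S * (∫ ω, ‖Xt ω - Xs ω‖ ∂P) ≤ S * S := mul_le_mul_of_nonneg_left hCS hS
              _ = _ := hSS
          nlinarith [hI2, hL]
  calc |∫ θ in (0:ℝ)..1, (F θ - F 0)|
      ≤ 2 * L * (∫ ω, ‖Xt ω - Xs ω‖ ^ 2 ∂P) * |1 - 0| := by
        have := intervalIntegral.norm_integral_le_of_norm_le_const hbound
        simpa [Real.norm_eq_abs] using this
    _ = 2 * L * (∫ ω, ‖Xt ω - Xs ω‖ ^ 2 ∂P) := by norm_num
end
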